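/- Let C be a binary linear code of length 13 such that every nonzero codeword has weight 8 or 16. Then dim C ≤ 2. -/

import Mathlib

/-!
Plotkin's averaging argument. For each coordinate, a linear code either vanishes there
identically or is nonzero there on exactly half of its codewords, so the total weight of a
code `C` of length `n` is at most `n |C| / 2`. Here every nonzero weight is `8`, since `16 > 13`,
hence `16 (|C| - 1) ≤ 13 |C|`, and so the power of two `|C|` is at most `4`.
-/

/-- The weight of a binary codeword: the number of nonzero coordinates. -/
def codeWeight {n : ℕ} (w : Fin n → ZMod 2) : ℕ :=
  (Finset.univ.filter (fun i => w i ≠ 0)).card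

open Finset

theorem AddMonoidHom.two_mul_card_filter_ne_zero_le {G : Type*} [AddGroup G] [Fintype G]
    (f : G →+ ZMod 2) : 2 * #{g | f g ≠ 0} ≤ Fintype.card G := by
  classical
  suffices #{g | f g ≠ 0} ≤ #{g | ¬f g ≠ 0} by
    have := card_filter_add_card_filter_not (s := univ) (fun g => f g ≠ 0)
    rw [card_univ] at this
    omega
  by_cases hf : ∃ g₀, f g₀ ≠ 0
  · obtain ⟨g₀, hg₀⟩ := hf
    have hadd : ∀ a b : ZMod 2, a ≠ 0 → b ≠ 0 → a + b = 0 := by decide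
    refine card_le_card_of_injOn (· + g₀) (fun g hg => ?_) (add_left_injective g₀).injOn
    simp only [coe_filter, mem_univ, true_and, Set.mem_ofPred_eq, map_add, not_not] at hg ⊢
    exact hadd _ _ hg hg₀
  · push Not at hf
    simp [hf]

theorem two_mul_sum_codeWeight_le {n : ℕ} (C : Submodule (ZMod 2) (Fin n → ZMod 2))
    [Fintype C] : 2 * ∑ c : C, codeWeight (c : Fin n → ZMod 2) ≤ n * Fintype.card C := by
  classical
  calc 2 * ∑ c : C, codeWeight (c : Fin n → ZMod 2)
      = ∑ i, 2 * #{c : C | (c : Fin n → ZMod 2) i ≠ 0} := by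
        simp only [codeWeight, card_filter, mul_sum]
        rw [sum_comm]
    _ ≤ ∑ _i : Fin n, Fintype.card C := sum_le_sum fun i _ =>
        AddMonoidHom.two_mul_card_filter_ne_zero_le
          ((Pi.evalAddMonoidHom (fun _ => ZMod 2) i).comp C.subtype.toAddMonoidHom)
    _ = n * Fintype.card C := by simp

theorem codeWeight_le {n : ℕ} (w : Fin n → ZMod 2) : codeWeight w ≤ n :=
  (card_filter_le _ _).trans_eq (card_fin n)

theorem sum_codeWeight_eq_of_forall_ne_zero {n : ℕ} (C : Submodule (ZMod 2) (Fin n → ZMod 2))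
    [Fintype C] (d : ℕ) (hC : ∀ c : C, c ≠ 0 → codeWeight (c : Fin n → ZMod 2) = d) :
    ∑ c : C, codeWeight (c : Fin n → ZMod 2) = d * (Fintype.card C - 1) := by
  classical
  have hzero : codeWeight ((0 : C) : Fin n → ZMod 2) = 0 := by simp [codeWeight]
  rw [← sum_erase (f := fun c : C => codeWeight (c : Fin n → ZMod 2)) _ hzero,
    sum_congr rfl fun c hc => hC c (ne_of_mem_erase hc), sum_const, card_erase_of_mem (mem_univ _), card_univ, smul_eq_mul, mul_comm]

/-- A binary linear code of length 13 in which every nonzero codeword has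
weight 8 or 16 has dimension at most 2. -/
theorem stmt_1 (C : Submodule (ZMod 2) (Fin 13 → ZMod 2))
    (h : ∀ w ∈ C, w ≠ 0 → codeWeight w ∈ ({8, 16} : Set ℕ)) :
    Module.finrank (ZMod 2) C ≤ 2 := by
  classical
  have hweight : ∀ c : C, c ≠ 0 → codeWeight (c : Fin 13 → ZMod 2) = 8 := by
    intro c hc
    have hle := codeWeight_le (c : Fin 13 → ZMod 2)
    rcases h c c.2 (by simpa using hc) with h8 | h16
    · exact h8
    · simp only [Set.mem_singleton_iff] at h16; omega
  have hplotkin := two_mul_sum_codeWeight_le C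
  rw [sum_codeWeight_eq_of_forall_ne_zero C 8 hweight, Module.card_eq_pow_finrank (K := ZMod 2),
    ZMod.card] at hplotkin
  by_contra! hk
  have : 2 ^ 3 ≤ 2 ^ Module.finrank (ZMod 2) C := Nat.pow_le_pow_right two_pos hk
  omega
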